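/- arXiv:1607.03558 — 2 statements merged into one kernel-verified Lean document; each statement's English description precedes it below -/
import Mathlib

section
/- Let $n \ge 1$. Let $V : \mathbb{Z} \to \mathbb{C}^3$ and $a, b : \mathbb{Z} \to \mathbb{C}$ satisfy, for every $i \in \mathbb{Z}$: $\det(V_i, V_{i+1}, V_{i+2}) = 1$ (determinant of the matrix with these columns) and $V_{i+3} = a_i V_{i+2} + b_i V_{i+1} + V_i$. Let $\tilde{M}$ be an invertible $3 \times 3$ complex matrix and $t : \mathbb{Z} \to \mathbb{C}$ satisfy $\tilde{M} V_i = t_i V_{i+n}$ for all $i$. Then for every $i \in \mathbb{Z}$: $t_i \, a_{i+n} = t_{i+2} \, a_i$ and $t_i \, b_{i+n} = t_{i+1} \, b_i$. -/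
open Matrix

/-- The 3×3 matrix whose columns are the vectors `v0, v1, v2`. -/
def colMat (v0 v1 v2 : Fin 3 → ℂ) : Matrix (Fin 3) (Fin 3) ℂ :=
  Matrix.of fun i j => ![v0, v1, v2] j i

/-!
Multiplying the frame `(V i, V (i+1), V (i+2))` by `M` gives the frame at `i + n` with columns
scaled by `t i, t (i+1), t (i+2)`; taking determinants, `t i * t (i+1) * t (i+2) = det M ≠ 0`,
so the `t i` are nonzero and `3`-periodic. Applying `M` to the recurrence at `i` and comparing with
`t i` times the recurrence at `i + n` (using `t (i+3) = t i`) leaves a linear relation between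
`V (i+n+1)` and `V (i+n+2)`, whose coefficients vanish because the frame at `i + n` is unimodular.
-/

lemma mul_colMat (M : Matrix (Fin 3) (Fin 3) ℂ) (v₀ v₁ v₂ : Fin 3 → ℂ) :
    M * colMat v₀ v₁ v₂ = colMat (M *ᵥ v₀) (M *ᵥ v₁) (M *ᵥ v₂) := by
  ext i j
  fin_cases j <;> simp [colMat, mul_apply, mulVec, dotProduct]

lemma colMat_smul (c₀ c₁ c₂ : ℂ) (v₀ v₁ v₂ : Fin 3 → ℂ) :
    colMat (c₀ • v₀) (c₁ • v₁) (c₂ • v₂) = colMat v₀ v₁ v₂ * diagonal ![c₀, c₁, c₂] := by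
  ext i j
  fin_cases j <;> simp [colMat, mul_comm]

lemma det_colMat_smul (c₀ c₁ c₂ : ℂ) (v₀ v₁ v₂ : Fin 3 → ℂ) :
    (colMat (c₀ • v₀) (c₁ • v₁) (c₂ • v₂)).det = c₀ * c₁ * c₂ * (colMat v₀ v₁ v₂).det := by
  rw [colMat_smul, det_mul, det_diagonal, Fin.prod_univ_three]
  simp only [Fin.isValue, cons_val_zero, cons_val_one, cons_val]
  ring

lemma colMat_mulVec (v₀ v₁ v₂ : Fin 3 → ℂ) (x₀ x₁ x₂ : ℂ) :
    colMat v₀ v₁ v₂ *ᵥ ![x₀, x₁, x₂] = x₀ • v₀ + x₁ • v₁ + x₂ • v₂ := by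
  ext i
  simp [colMat, mulVec, dotProduct, Fin.sum_univ_three, mul_comm]

lemma eq_zero_of_det_colMat_ne_zero {v₀ v₁ v₂ : Fin 3 → ℂ} (h : (colMat v₀ v₁ v₂).det ≠ 0)
    {x₀ x₁ x₂ : ℂ} (hx : x₀ • v₀ + x₁ • v₁ + x₂ • v₂ = 0) : x₀ = 0 ∧ x₁ = 0 ∧ x₂ = 0 := by
  have hvec : ![x₀, x₁, x₂] = 0 :=
    eq_zero_of_mulVec_eq_zero h (by rw [colMat_mulVec, hx])
  exact ⟨congrFun hvec 0, congrFun hvec 1, congrFun hvec 2⟩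

lemma ne_zero_of_mul_mul_eq {M₀ : Type*} [MulZeroClass M₀] {t : ℤ → M₀} {c : M₀}
    (ht : ∀ i, t i * t (i + 1) * t (i + 2) = c) (hc : c ≠ 0) (i : ℤ) : t i ≠ 0 := by
  intro hti
  exact hc (by rw [← ht i, hti, zero_mul, zero_mul])

lemma periodic_of_mul_mul_eq {M₀ : Type*} [CommMonoidWithZero M₀] [IsLeftCancelMulZero M₀]
    {t : ℤ → M₀} {c : M₀}
    (ht : ∀ i, t i * t (i + 1) * t (i + 2) = c) (hc : c ≠ 0) : Function.Periodic t 3 := by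
  intro i
  have hne : t (i + 1) * t (i + 2) ≠ 0 :=
    mul_ne_zero (ne_zero_of_mul_mul_eq ht hc _) (ne_zero_of_mul_mul_eq ht hc _)
  refine mul_left_cancel₀ hne ?_
  calc t (i + 1) * t (i + 2) * t (i + 3) = c := by
        simpa only [add_assoc, Int.reduceAdd] using ht (i + 1)
    _ = t (i + 1) * t (i + 2) * t i := by rw [← ht i, mul_rotate]

lemma mul_mul_eq_det_of_mulVec_eq_smul {n : ℤ} {V : ℤ → Fin 3 → ℂ}
    (hdet : ∀ i : ℤ, (colMat (V i) (V (i + 1)) (V (i + 2))).det = 1)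
    {M : Matrix (Fin 3) (Fin 3) ℂ} {t : ℤ → ℂ} (hmon : ∀ i : ℤ, M *ᵥ V i = t i • V (i + n))
    (i : ℤ) : t i * t (i + 1) * t (i + 2) = M.det := by
  have hframe := congrArg det (mul_colMat M (V i) (V (i + 1)) (V (i + 2)))
  rw [det_mul, hdet, mul_one, hmon, hmon, hmon, det_colMat_smul, add_right_comm i 1,
    add_right_comm i 2, hdet, mul_one] at hframe
  exact hframe.symm

theorem recurrence_quasiperiodicity_general (n : ℕ)
    (V : ℤ → Fin 3 → ℂ) (a b : ℤ → ℂ)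
    (hdet : ∀ i : ℤ, (colMat (V i) (V (i + 1)) (V (i + 2))).det = 1)
    (hrec : ∀ i : ℤ, V (i + 3) = a i • V (i + 2) + b i • V (i + 1) + V i)
    (M : Matrix (Fin 3) (Fin 3) ℂ) (hM : IsUnit M.det)
    (t : ℤ → ℂ) (hmon : ∀ i : ℤ, M.mulVec (V i) = t i • V (i + n)) :
    ∀ i : ℤ, t i * a (i + n) = t (i + 2) * a i ∧ t i * b (i + n) = t (i + 1) * b i := by
  intro i
  have hper : Function.Periodic t 3 :=
    periodic_of_mul_mul_eq (mul_mul_eq_det_of_mulVec_eq_smul hdet hmon) hM.ne_zero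
  have hmon' (k : ℤ) : M *ᵥ V (i + k) = t (i + k) • V (i + n + k) := by
    rw [hmon, add_right_comm]
  have himage : t i • V (i + n + 3) =
      (a i * t (i + 2)) • V (i + n + 2) + (b i * t (i + 1)) • V (i + n + 1) + t i • V (i + n) :=
    calc t i • V (i + n + 3) = M *ᵥ V (i + 3) := by rw [hmon' 3, hper]
      _ = _ := by
        rw [hrec, mulVec_add, mulVec_add, mulVec_smul, mulVec_smul, hmon' 2, hmon' 1, hmon,
          smul_smul, smul_smul]
  have hshift : t i • V (i + n + 3) = (t i * a (i + n)) • V (i + n + 2) +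
      (t i * b (i + n)) • V (i + n + 1) + t i • V (i + n) := by
    rw [hrec]; module
  have hframe : (colMat (V (i + n)) (V (i + n + 1)) (V (i + n + 2))).det ≠ 0 := by
    rw [hdet]; exact one_ne_zero
  obtain ⟨-, hb, ha⟩ := eq_zero_of_det_colMat_ne_zero hframe (x₀ := 0)
    (x₁ := t i * b (i + n) - t (i + 1) * b i) (x₂ := t i * a (i + n) - t (i + 2) * a i)
    (by linear_combination (norm := module) himage - hshift)
  exact ⟨by linear_combination ha, by linear_combination hb⟩

theorem recurrence_quasiperiodicity (n : ℕ) (hn : 1 ≤ n)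
    (V : ℤ → Fin 3 → ℂ) (a b : ℤ → ℂ)
    (hdet : ∀ i : ℤ, (colMat (V i) (V (i + 1)) (V (i + 2))).det = 1)
    (hrec : ∀ i : ℤ, V (i + 3) = a i • V (i + 2) + b i • V (i + 1) + V i)
    (M : Matrix (Fin 3) (Fin 3) ℂ) (hM : IsUnit M.det)
    (t : ℤ → ℂ) (hmon : ∀ i : ℤ, M.mulVec (V i) = t i • V (i + n)) :
    ∀ i : ℤ, t i * a (i + n) = t (i + 2) * a i ∧ t i * b (i + n) = t (i + 1) * b i :=
  recurrence_quasiperiodicity_general n V a b hdet hrec M hM t hmon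
end

section
/- Let $n \ge 3$ and let $x_1, \dots, x_n, y_1, \dots, y_n$ be real numbers with $0 < x_j < 1$ and $0 < y_j < 1$ for all $j$. Over the polynomial ring $\mathbb{R}[s]$, define the $3 \times 3$ matrices $\hat{L}_j^*(s) := \begin{pmatrix} 0 & 1 & 1 - x_j y_j \\ x_j \, s & 0 & 0 \\ 0 & 1 & 1 \end{pmatrix}$ and set $P^*(s) := \mathrm{trace}\big(\hat{L}_1^*(s) \hat{L}_2^*(s) \cdots \hat{L}_n^*(s)\big) \in \mathbb{R}[s]$. Then for every integer $k$ with $1 \le k \le \lfloor n/2 \rfloor$, the coefficient of $s^k$ in $P^*(s)$ is strictly positive. -/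
open Matrix Polynomial

/-!
Compare matrices over `ℝ[s]` entrywise and coefficientwise. With `εⱼ = min(xⱼ, 1 - xⱼyⱼ) > 0`,
each `L̂ⱼ*` dominates `εⱼ A`, where `A` is `L̂*` at the corner invariants `x = 1`, `y = 0`. Since
all these matrices have nonnegative coefficients, the domination passes to products and traces, so
the coefficient of `s^k` in `P*` is at least `(∏ εⱼ)` times that in `tr Aⁿ`. By Cayley–Hamilton
(`A³ = A² + s A`) the traces `tr Aᵐ` satisfy the Lucas recursion `tₘ₊₃ = tₘ₊₂ + s tₘ₊₁`, whose
coefficients of `s^k` are positive for `k ≤ m / 2`.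
-/

/-- The conjugated adjugate Lax matrix `L̂ⱼ*(s)` over `ℝ[s]`, with corner
invariants `x j`, `y j`. -/
noncomputable def LhatStarPoly (n : ℕ) (x y : Fin n → ℝ) (j : Fin n) :
    Matrix (Fin 3) (Fin 3) ℝ[X] :=
  !![0, 1, C (1 - x j * y j);
     C (x j) * X, 0, 0;
     0, 1, 1]

namespace Polynomial

variable (R : Type*) [Semiring R] [PartialOrder R] [IsOrderedRing R]

def nonnegCoeffs : Subsemiring R[X] where
  carrier := {p | ∀ k, 0 ≤ p.coeff k}
  mul_mem' {p q} hp hq k := by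
    rw [coeff_mul]
    exact Finset.sum_nonneg fun ij _ => mul_nonneg (hp ij.1) (hq ij.2)
  one_mem' k := by
    rw [coeff_one]
    split_ifs <;> simp
  add_mem' {p q} hp hq k := by
    rw [coeff_add]
    exact add_nonneg (hp k) (hq k)
  zero_mem' k := by simp

variable {R}

theorem smul_mem_nonnegCoeffs {c : R} (hc : 0 ≤ c) {p : R[X]} (hp : p ∈ nonnegCoeffs R) :
    c • p ∈ nonnegCoeffs R := fun k => by
  rw [coeff_smul, smul_eq_mul]
  exact mul_nonneg hc (hp k)

theorem coeff_le_coeff_of_sub_mem_nonnegCoeffs {R : Type*} [Ring R] [PartialOrder R]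
    [IsOrderedRing R] {p q : R[X]} (h : p - q ∈ nonnegCoeffs R) (k : ℕ) :
    q.coeff k ≤ p.coeff k :=
  sub_nonneg.mp (by simpa only [coeff_sub] using h k)

end Polynomial

theorem Subsemiring.list_prod_ofFn_sub_mem {R : Type*} [Ring R] (S : Subsemiring R) :
    ∀ {n : ℕ} {a b : Fin n → R}, (∀ j, b j ∈ S) → (∀ j, a j - b j ∈ S) →
      (List.ofFn a).prod - (List.ofFn b).prod ∈ S
  | 0, _, _, _, _ => by simp
  | n + 1, a, b, hb, hab => by
    set P := (List.ofFn fun j : Fin n => a j.succ).prod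
    set Q := (List.ofFn fun j : Fin n => b j.succ).prod
    have hPQ : P - Q ∈ S := S.list_prod_ofFn_sub_mem (fun j => hb j.succ) (fun j => hab j.succ)
    have hQ : Q ∈ S := S.list_prod_mem (by simp [hb])
    have hP : P ∈ S := by simpa using add_mem hPQ hQ
    simp only [List.ofFn_succ, List.prod_cons]
    rw [show a 0 * P - b 0 * Q = (a 0 - b 0) * P + b 0 * (P - Q) by noncomm_ring]
    exact add_mem (mul_mem (hab 0) hP) (mul_mem (hb 0) hPQ)

theorem Matrix.trace_mem_of_mem_matrix {R n : Type*} [NonAssocSemiring R] [Fintype n]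
    [DecidableEq n] {S : Subsemiring R} {M : Matrix n n R} (hM : M ∈ S.matrix) :
    M.trace ∈ S :=
  sum_mem fun i _ => hM i i

theorem List.prod_ofFn_smul {α M : Type*} [CommMonoid α] [Monoid M] [MulAction α M]
    [IsScalarTower α M M] [SMulCommClass α M M] :
    ∀ {n : ℕ} (c : Fin n → α) (m : M), (List.ofFn fun j => c j • m).prod = (∏ j, c j) • m ^ n
  | 0, _, _ => by simp
  | n + 1, c, m => by
    rw [List.ofFn_succ, List.prod_cons, List.prod_ofFn_smul, Fin.prod_univ_succ,
      smul_mul_smul_comm, pow_succ']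

section cornerMatrix

variable {R : Type*} [CommRing R]

noncomputable def cornerMatrix : Matrix (Fin 3) (Fin 3) R[X] :=
  !![0, 1, 1;
     X, 0, 0;
     0, 1, 1]

theorem cornerMatrix_pow_three :
    (cornerMatrix : Matrix (Fin 3) (Fin 3) R[X]) ^ 3 =
      cornerMatrix ^ 2 + (X : R[X]) • cornerMatrix := by
  ext i j
  fin_cases i <;> fin_cases j <;> simp [pow_succ, cornerMatrix] <;> ring

theorem trace_cornerMatrix_pow_add_three (m : ℕ) :
    ((cornerMatrix : Matrix (Fin 3) (Fin 3) R[X]) ^ (m + 3)).trace =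
      (cornerMatrix ^ (m + 2)).trace + X * (cornerMatrix ^ (m + 1)).trace := by
  rw [pow_add, cornerMatrix_pow_three, mul_add, mul_smul_comm, ← pow_add, ← pow_succ, trace_add,
    trace_smul, smul_eq_mul]

variable [PartialOrder R] [IsStrictOrderedRing R]

theorem cornerMatrix_mem_matrix_nonnegCoeffs :
    (cornerMatrix : Matrix (Fin 3) (Fin 3) R[X]) ∈ (nonnegCoeffs R).matrix := by
  intro i j k
  fin_cases i <;> fin_cases j <;> simp [cornerMatrix, coeff_X, coeff_one] <;> split_ifs <;> simp

theorem coeff_trace_cornerMatrix_pow_pos :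
    ∀ (m k : ℕ), k ≤ m / 2 → 0 < ((cornerMatrix : Matrix (Fin 3) (Fin 3) R[X]) ^ m).trace.coeff k
  | 0, k, hk => by
    obtain rfl : k = 0 := by omega
    simp [trace_one]
  | 1, k, hk => by
    obtain rfl : k = 0 := by omega
    simp [cornerMatrix, trace_fin_three]
  | 2, k, hk => by
    interval_cases k <;>
      simp [sq, cornerMatrix, trace_fin_three, coeff_X, coeff_one, one_add_one_eq_two]
  | m + 3, 0, _ => by
    simpa [trace_cornerMatrix_pow_add_three] using
      coeff_trace_cornerMatrix_pow_pos (m + 2) 0 (by omega)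
  | m + 3, k + 1, hk => by
    rw [trace_cornerMatrix_pow_add_three, coeff_add, coeff_X_mul]
    exact add_pos_of_nonneg_of_pos
      (trace_mem_of_mem_matrix (pow_mem cornerMatrix_mem_matrix_nonnegCoeffs _) _)
      (coeff_trace_cornerMatrix_pow_pos (m + 1) k (by omega))

end cornerMatrix

theorem LhatStarPoly_sub_smul_cornerMatrix_mem {n : ℕ} (x y : Fin n → ℝ) (j : Fin n) {ε : ℝ}
    (hε₁ : ε ≤ 1) (hεx : ε ≤ x j) (hεxy : ε ≤ 1 - x j * y j) :
    LhatStarPoly n x y j - ε • cornerMatrix ∈ (nonnegCoeffs ℝ).matrix := by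
  intro i l k
  fin_cases i <;> fin_cases l <;>
    simp [LhatStarPoly, cornerMatrix, coeff_X, coeff_one, coeff_C] <;> split_ifs <;> simp [*]

theorem odd_invariants_positive_convex_general (n : ℕ)
    (x y : Fin n → ℝ) (hx : ∀ j, 0 < x j ∧ x j < 1) (hy : ∀ j, 0 < y j ∧ y j < 1) :
    ∀ k : ℕ, 1 ≤ k → k ≤ n / 2 →
      0 < (((List.ofFn fun j : Fin n => LhatStarPoly n x y j).prod).trace).coeff k := by
  intro k _ hk
  set ε : Fin n → ℝ := fun j => min (x j) (1 - x j * y j)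
  have hε : ∀ j, 0 < ε j := fun j => lt_min (hx j).1 (by nlinarith [hx j, hy j])
  have hdom : ∀ j, LhatStarPoly n x y j - ε j • cornerMatrix ∈ (nonnegCoeffs ℝ).matrix :=
    fun j => LhatStarPoly_sub_smul_cornerMatrix_mem x y j
      ((min_le_left _ _).trans (hx j).2.le) (min_le_left _ _) (min_le_right _ _)
  have hbound : ∀ j, ε j • cornerMatrix ∈ (nonnegCoeffs ℝ).matrix := fun j i l =>
    smul_mem_nonnegCoeffs (hε j).le (cornerMatrix_mem_matrix_nonnegCoeffs i l)
  have hprod := (nonnegCoeffs ℝ).matrix.list_prod_ofFn_sub_mem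
    (a := fun j => LhatStarPoly n x y j) (b := fun j => ε j • cornerMatrix) hbound hdom
  have htrace := trace_mem_of_mem_matrix hprod
  rw [trace_sub, List.prod_ofFn_smul] at htrace
  calc 0 < (∏ j, ε j) * ((cornerMatrix : Matrix (Fin 3) (Fin 3) ℝ[X]) ^ n).trace.coeff k :=
        mul_pos (Finset.prod_pos fun j _ => hε j) (coeff_trace_cornerMatrix_pow_pos n k hk)
    _ = ((∏ j, ε j) • cornerMatrix ^ n).trace.coeff k := by
        rw [trace_smul, coeff_smul, smul_eq_mul]
    _ ≤ _ := coeff_le_coeff_of_sub_mem_nonnegCoeffs htrace k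

theorem odd_invariants_positive_convex (n : ℕ) (hn : 3 ≤ n)
    (x y : Fin n → ℝ) (hx : ∀ j, 0 < x j ∧ x j < 1) (hy : ∀ j, 0 < y j ∧ y j < 1) :
    ∀ k : ℕ, 1 ≤ k → k ≤ n / 2 →
      0 < (((List.ofFn fun j : Fin n => LhatStarPoly n x y j).prod).trace).coeff k :=
  odd_invariants_positive_convex_general n x y hx hy
end
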